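/- Let (A^*,·,Δ) be a BV algebra, L^* a graded vector space, and m: L^k → A^{k+1}, e: A^{k+1} → L^{k+1} linear maps (for all k) such that e∘m = 0 and Δ = m∘e (as happens for the maps of a long exact sequence ⋯ → L^{k+2} → L^k →^m A^{k+1} →^e L^{k+1} → ⋯ with Δ = m∘e). Then {a,b} := (−1)^{|a|} e(m(a)·m(b)) satisfies the graded Jacobi identity {a,{b,c}} = {{a,b},c} + (−1)^{|a||b|}{b,{a,c}} and defines a graded Lie bracket on L^*; moreover m sends this bracket to the opposite of the Gerstenhaber bracket: m{a,b} = −[m(a),m(b)]. -/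
import Mathlib


/-! # Batalin–Vilkovisky algebras over a field -/

universe u

noncomputable section

/-- The Koszul sign `(-1)^n` viewed in the field `k`. -/
def gsign (k : Type u) [Field k] (n : ℤ) : k := ((Int.negOnePow n : ℤ) : k)

lemma gsign_add (k : Type u) [Field k] (p q : ℤ) :
    gsign k (p + q) = gsign k p * gsign k q := by
  unfold gsign; rw [Int.negOnePow_add]; push_cast; ring

lemma gsign_sq (k : Type u) [Field k] (p : ℤ) : gsign k p * gsign k p = 1 := by
  unfold gsign; rw [← Int.cast_mul, ← Units.val_mul, Int.units_mul_self]; norm_num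

lemma gsign_one' (k : Type u) [Field k] : gsign k 1 = -1 := by
  unfold gsign; rw [Int.negOnePow_one]; norm_num

/-- A Batalin–Vilkovisky algebra over `k`: a graded commutative associative unital
graded `k`-algebra `(C, gr)` together with a degree-one operator `Δ` satisfying
`Δ² = 0` and the 7-term relation.  Its Gerstenhaber bracket is
`[a,b] = (-1)^{|a|} Δ(ab) - (-1)^{|a|} Δ(a)b - aΔ(b)`. -/
structure BVAlgebra (k : Type u) [Field k] : Type (u + 1) where
  C : Type u
  [ring : Ring C]
  [alg : Algebra k C]
  gr : ℤ → Submodule k C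
  one_mem : (1 : C) ∈ gr 0
  mul_mem : ∀ {i j : ℤ} {a b : C}, a ∈ gr i → b ∈ gr j → a * b ∈ gr (i + j)
  internal : DirectSum.IsInternal gr
  comm : ∀ {i j : ℤ} (a b : C), a ∈ gr i → b ∈ gr j → a * b = gsign k (i * j) • (b * a)
  Δ : C →ₗ[k] C
  Δ_mem : ∀ {i : ℤ} {x : C}, x ∈ gr i → Δ x ∈ gr (i + 1)
  Δ_sq : ∀ x, Δ (Δ x) = 0
  seven : ∀ {i j l : ℤ} (a b c : C), a ∈ gr i → b ∈ gr j → c ∈ gr l →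
      Δ (a * b * c) = Δ (a * b) * c + gsign k i • (a * Δ (b * c))
        + gsign k ((i - 1) * j) • (b * Δ (a * c))
        - Δ a * b * c - gsign k i • (a * Δ b * c) - gsign k (i + j) • (a * b * Δ c)

attribute [instance] BVAlgebra.ring BVAlgebra.alg

/-- Let `(A^*, ·, Δ)` be a BV algebra, `L^*` a graded vector space,
and `m : L^k → A^{k+1}`, `e : A^{k+1} → L^{k+1}` linear maps with `e ∘ m = 0` and
`Δ = m ∘ e` (as for the maps of a long exact sequence with `Δ = m ∘ e`).  Then
`{a,b} := (-1)^{|a|} e (m a · m b)` satisfies the graded Jacobi identity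
`{a,{b,c}} = {{a,b},c} + (-1)^{|a||b|} {b,{a,c}}` and defines a graded Lie bracket
on `L^*` (it is graded antisymmetric); moreover `m` sends this bracket to the
opposite of the Gerstenhaber bracket: `m {a,b} = -[m a, m b]`. -/
theorem bv_exact_sequence_lie_bracket {k : Type u} [Field k] (V : BVAlgebra k)
    (L : Type u) [AddCommGroup L] [Module k L] (grL : ℤ → Submodule k L)
    (m : L →ₗ[k] V.C) (e : V.C →ₗ[k] L)
    (hm : ∀ (i : ℤ), ∀ x ∈ grL i, m x ∈ V.gr (i + 1))
    (he : ∀ (i : ℤ), ∀ y ∈ V.gr i, e y ∈ grL i)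
    (hem : ∀ x : L, e (m x) = 0)
    (hΔ : ∀ y : V.C, V.Δ y = m (e y)) :
    -- graded Jacobi identity for {a,b} := (-1)^{|a|} e (m a * m b)
    (∀ (i j l : ℤ) (a b c : L), a ∈ grL i → b ∈ grL j → c ∈ grL l →
      gsign k i • e (m a * m (gsign k j • e (m b * m c))) =
        gsign k (i + j) • e (m (gsign k i • e (m a * m b)) * m c)
        + gsign k (i * j) • (gsign k j • e (m b * m (gsign k i • e (m a * m c))))) ∧
    -- graded antisymmetry: {a,b} is a graded Lie bracket on L^*
    (∀ (i j : ℤ) (a b : L), a ∈ grL i → b ∈ grL j →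
      gsign k i • e (m a * m b) = -(gsign k (i * j) • (gsign k j • e (m b * m a)))) ∧
    -- m sends the bracket to the opposite Gerstenhaber bracket: m{a,b} = -[m a, m b]
    (∀ (i j : ℤ) (a b : L), a ∈ grL i → b ∈ grL j →
      m (gsign k i • e (m a * m b)) =
        -(gsign k (i + 1) • V.Δ (m a * m b) - gsign k (i + 1) • (V.Δ (m a) * m b)
          - m a * V.Δ (m b))) := by
  have hΔm : ∀ x : L, V.Δ (m x) = 0 := fun x => by rw [hΔ, hem, map_zero]
  have heΔ : ∀ y : V.C, e (V.Δ y) = 0 := fun y => by rw [hΔ, hem]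
  refine ⟨?_, ?_, ?_⟩
  · -- Jacobi
    intro i j l a b c ha hb hc
    have h7 := V.seven (m a) (m b) (m c) (hm i a ha) (hm j b hb) (hm l c hc)
    simp only [hΔm, zero_mul, mul_zero, smul_zero, sub_zero] at h7
    have h7e := congrArg e h7
    simp only [map_add, map_smul, heΔ] at h7e
    -- h7e : 0 = e (Δ(AB) * C) + s • e (A * Δ(BC)) + t • e (B * Δ(AC))
    rw [eq_comm, add_assoc, add_eq_zero_iff_eq_neg, neg_add, ← sub_eq_add_neg] at h7e
    simp only [map_smul, ← hΔ, mul_smul_comm, smul_mul_assoc, smul_smul] at *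
    rw [h7e]
    rw [show ((i:ℤ)+1-1)*(j+1) = i*j + i by ring]
    simp only [gsign_add, gsign_one']
    match_scalars
    · linear_combination (-(gsign k i * gsign k j)) * gsign_sq k i
    · linear_combination (gsign k (i*j) * gsign k j * gsign k i) * gsign_sq k i
  · -- antisymmetry
    intro i j a b ha hb
    rw [V.comm (m a) (m b) (hm i a ha) (hm j b hb)]
    rw [show ((i:ℤ)+1)*(j+1) = i*j + i + j + 1 by ring]
    simp only [gsign_add, gsign_one', map_smul, smul_smul]
    match_scalars
    linear_combination (norm := ring_nf) (- gsign k (i*j) * gsign k j) * gsign_sq k i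
  · -- m of bracket
    intro i j a b ha hb
    rw [map_smul, ← hΔ, hΔm, hΔm, gsign_add, gsign_one']
    simp only [zero_mul, mul_zero, smul_zero, sub_zero]
    match_scalars
    ring

end
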